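/- arXiv:2509.07663 — 2 statements merged into one kernel-verified Lean document; each statement's English description precedes it below -/
import Mathlib

section
/- Let f : Z → Y be a local homeomorphism between locally compact Hausdorff spaces, A an abelian group, and g : Z → A a compactly supported locally constant function. Then for each y ∈ Y the fiber sum (f_* g)(y) = Σ_{z ∈ f⁻¹(y)} g(z) is a finite sum, and the resulting function f_* g : Y → A is compactly supported and locally constant. Moreover f_* : C_c(Z, A) → C_c(Y, A) is a group homomorphism. -/
/-!
Fix `y₀` and let `F` be the finite set of points of `tsupport g` over `y₀`. Around each `z ∈ F`
choose pairwise disjoint open sheets on which `f` is injective and `g` is constant. The part of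
`tsupport g` outside the sheets is compact, so its image is closed and misses `y₀`. Hence for `y`
near `y₀` the fiber over `y` meets `tsupport g` only inside the sheets, exactly once in each, and
the fiber sum over `y` equals `∑ z ∈ F, g z`, the fiber sum over `y₀`.
-/

open Function Set Filter Topology

noncomputable def fiberSum {Z Y A : Type*} [AddCommMonoid A] (f : Z → Y) (g : Z → A)
    (y : Y) : A :=
  ∑ᶠ z ∈ f ⁻¹' {y}, g z

section Algebra

variable {Z Y A : Type*} [AddCommMonoid A] {f : Z → Y}

theorem support_fiberSum_subset (f : Z → Y) (g : Z → A) :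
    support (fiberSum f g) ⊆ f '' support g := fun _ hy ↦ by
  obtain ⟨z, hz, hgz⟩ := exists_ne_zero_of_finsum_mem_ne_zero hy
  exact ⟨z, hgz, hz⟩

theorem fiberSum_add {g₁ g₂ : Z → A} (h₁ : ∀ y, (support g₁ ∩ f ⁻¹' {y}).Finite)
    (h₂ : ∀ y, (support g₂ ∩ f ⁻¹' {y}).Finite) :
    fiberSum f (g₁ + g₂) = fiberSum f g₁ + fiberSum f g₂ :=
  funext fun y ↦ finsum_mem_add_distrib' (inter_comm _ _ ▸ h₁ y) (inter_comm _ _ ▸ h₂ y)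

theorem fiberSum_eq_finsum_of_pairwiseDisjoint {g : Z → A} {F : Set Z} (hF : F.Finite)
    {O : Z → Set Z} (hdisj : F.PairwiseDisjoint O) (hinj : ∀ z ∈ F, (O z).InjOn f)
    (hconst : ∀ z ∈ F, ∀ w ∈ O z, g w = g z) {y : Y} (hy : ∀ z ∈ F, y ∈ f '' O z)
    (hcover : support g ∩ f ⁻¹' {y} ⊆ ⋃ z ∈ F, O z) :
    fiberSum f g y = ∑ᶠ z ∈ F, g z := by
  have hsheet : ∀ z ∈ F, ∃ w, O z ∩ f ⁻¹' {y} = {w} ∧ g w = g z := by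
    intro z hz
    obtain ⟨w, hw, rfl⟩ := hy z hz
    refine ⟨w, subset_antisymm (fun v hv ↦ hinj z hz hv.1 hw hv.2) ?_, hconst z hz w hw⟩
    exact singleton_subset_iff.2 ⟨hw, rfl⟩
  calc fiberSum f g y = ∑ᶠ w ∈ ⋃ z ∈ F, O z ∩ f ⁻¹' {y}, g w := by
        refine finsum_mem_inter_support_eq' _ _ _ fun w hw ↦ ⟨fun hwy ↦ ?_, fun hw' ↦ ?_⟩
        · obtain ⟨z, hz, hwz⟩ := mem_iUnion₂.1 (hcover ⟨hw, hwy⟩)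
          exact mem_biUnion hz ⟨hwz, hwy⟩
        · obtain ⟨z, -, hwz⟩ := mem_iUnion₂.1 hw'
          exact hwz.2
    _ = ∑ᶠ z ∈ F, ∑ᶠ w ∈ O z ∩ f ⁻¹' {y}, g w :=
        finsum_mem_biUnion (hdisj.mono fun _ ↦ inter_subset_left) hF fun z hz ↦ by
          obtain ⟨w, hw, -⟩ := hsheet z hz
          exact hw ▸ finite_singleton w
    _ = ∑ᶠ z ∈ F, g z := finsum_mem_congr rfl fun z hz ↦ by
        obtain ⟨w, hw, hgw⟩ := hsheet z hz
        rw [hw, finsum_mem_singleton, hgw]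

end Algebra

section Topology

variable {Z Y A : Type*} [TopologicalSpace Z] [TopologicalSpace Y] {f : Z → Y}

theorem IsLocalHomeomorph.finite_inter_preimage_singleton [T1Space Y]
    (hf : IsLocalHomeomorph f) {K : Set Z} (hK : IsCompact K) (y : Y) :
    (K ∩ f ⁻¹' {y}).Finite :=
  (hK.inter_right (isClosed_singleton.preimage hf.continuous)).finite <|
    (hf.isLocalHomeomorphOn.mono (subset_univ _)).isDiscrete_of_image <|
      (subsingleton_singleton.anti (image_subset_iff.2 inter_subset_right)).isDiscrete

theorem IsLocalHomeomorph.finite_support_inter_preimage_singleton [T1Space Y] [Zero A]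
    (hf : IsLocalHomeomorph f) {g : Z → A} (hg : HasCompactSupport g) (y : Y) :
    (support g ∩ f ⁻¹' {y}).Finite :=
  (hf.finite_inter_preimage_singleton hg y).subset
    (inter_subset_inter_left _ (subset_tsupport g))

theorem IsCompact.eventually_inter_preimage_singleton_subset [T2Space Y] (hf : Continuous f)
    {K U : Set Z} (hK : IsCompact K) (hU : IsOpen U) {y₀ : Y} (hKU : K ∩ f ⁻¹' {y₀} ⊆ U) :
    ∀ᶠ y in 𝓝 y₀, K ∩ f ⁻¹' {y} ⊆ U := by
  have hclosed : IsClosed (f '' (K \ U)) := ((hK.diff hU).image hf).isClosed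
  have hy₀ : y₀ ∉ f '' (K \ U) := by
    rintro ⟨z, ⟨hzK, hzU⟩, hzy⟩
    exact hzU (hKU ⟨hzK, hzy⟩)
  filter_upwards [hclosed.isOpen_compl.mem_nhds hy₀] with y hy z ⟨hzK, hzy⟩
  by_contra hzU
  exact hy ⟨z, ⟨hzK, hzU⟩, hzy⟩

theorem Set.Finite.exists_pairwiseDisjoint_isOpen_subset [T2Space Z] {F : Set Z} (hF : F.Finite)
    {N : Z → Set Z} (hN : ∀ z, N z ∈ 𝓝 z) :
    ∃ O : Z → Set Z, (∀ z, (z ∈ O z ∧ IsOpen (O z)) ∧ O z ⊆ N z) ∧ F.PairwiseDisjoint O :=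
  F.pairwiseDisjoint_nhds.exists_mem_filter_basis hF fun z ↦
    (nhds_basis_opens z).restrict_subset (hN z)

theorem HasCompactSupport.fiberSum [T2Space Y] [AddCommMonoid A] (hf : Continuous f)
    {g : Z → A} (hg : HasCompactSupport g) : HasCompactSupport (fiberSum f g) :=
  .intro' (hg.image hf) (hg.image hf).isClosed fun _ hy ↦ notMem_support.1 fun h ↦
    hy (image_mono (subset_tsupport g) (support_fiberSum_subset f g h))

theorem IsLocallyConstant.fiberSum [T2Space Z] [T2Space Y] [AddCommMonoid A]
    (hf : IsLocalHomeomorph f) {g : Z → A} (hg : IsLocallyConstant g)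
    (hgc : HasCompactSupport g) : IsLocallyConstant (fiberSum f g) := by
  refine (IsLocallyConstant.iff_eventually_eq _).2 fun y₀ ↦ ?_
  set F := tsupport g ∩ f ⁻¹' {y₀}
  have hF : F.Finite := hf.finite_inter_preimage_singleton hgc y₀
  choose U hU hinj using isLocallyInjective_iff_nhds.1 hf.isLocallyInjective
  obtain ⟨O, hO, hdisj⟩ := hF.exists_pairwiseDisjoint_isOpen_subset (N := fun z ↦ U z ∩ g ⁻¹' {g z})
    fun z ↦ inter_mem (hU z) ((hg.isOpen_fiber _).mem_nhds rfl)
  have hsum : ∀ y, (∀ z ∈ F, y ∈ f '' O z) → tsupport g ∩ f ⁻¹' {y} ⊆ ⋃ z ∈ F, O z →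
      _root_.fiberSum f g y = ∑ᶠ z ∈ F, g z := fun y hy hcover ↦
    fiberSum_eq_finsum_of_pairwiseDisjoint hF hdisj
      (fun z _ ↦ (hinj z).mono ((hO z).2.trans inter_subset_left))
      (fun z _ w hw ↦ ((hO z).2 hw).2) hy
      ((inter_subset_inter_left _ (subset_tsupport g)).trans hcover)
  have hFO : F ⊆ ⋃ z ∈ F, O z := fun z hz ↦ mem_biUnion hz (hO z).1.1
  have hsheets : ∀ᶠ y in 𝓝 y₀, ∀ z ∈ F, y ∈ f '' O z :=
    (eventually_all_finite hF).2 fun z hz ↦ by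
      rw [← show f z = y₀ from hz.2]
      exact hf.isOpenMap.image_mem_nhds ((hO z).1.2.mem_nhds (hO z).1.1)
  have hcover : ∀ᶠ y in 𝓝 y₀, tsupport g ∩ f ⁻¹' {y} ⊆ ⋃ z ∈ F, O z :=
    hgc.eventually_inter_preimage_singleton_subset hf.continuous
      (isOpen_biUnion fun z _ ↦ (hO z).1.2) hFO
  filter_upwards [hsheets, hcover] with y hy hyc
  rw [hsum y hy hyc, hsum y₀ (fun z hz ↦ ⟨z, (hO z).1.1, hz.2⟩) hFO]

end Topology

theorem pushforward_fiber_sum_general {Z Y A : Type*}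
    [TopologicalSpace Z] [TopologicalSpace Y]
    [T2Space Z] [T2Space Y]
    [AddCommGroup A]
    (f : Z → Y) (hf : IsLocalHomeomorph f)
    (g : Z → A) (hg : IsLocallyConstant g) (hgc : HasCompactSupport g) :
    (∀ y : Y, (Function.support g ∩ f ⁻¹' {y}).Finite) ∧
    IsLocallyConstant (fun y => ∑ᶠ z ∈ f ⁻¹' {y}, g z) ∧
    HasCompactSupport (fun y => ∑ᶠ z ∈ f ⁻¹' {y}, g z) ∧
    (∀ g₁ g₂ : Z → A, IsLocallyConstant g₁ → HasCompactSupport g₁ →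
      IsLocallyConstant g₂ → HasCompactSupport g₂ →
      (fun y => ∑ᶠ z ∈ f ⁻¹' {y}, (g₁ + g₂) z) =
        (fun y => ∑ᶠ z ∈ f ⁻¹' {y}, g₁ z) + fun y => ∑ᶠ z ∈ f ⁻¹' {y}, g₂ z) :=
  ⟨hf.finite_support_inter_preimage_singleton hgc, hg.fiberSum hf hgc,
    hgc.fiberSum hf.continuous, fun _ _ _ hc₁ _ hc₂ ↦
      fiberSum_add (hf.finite_support_inter_preimage_singleton hc₁)
        (hf.finite_support_inter_preimage_singleton hc₂)⟩

/-- Fiber-sum pushforward along a local homeomorphism between locally compact Hausdorff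
spaces: for a compactly supported locally constant function `g : Z → A`, for each `y`
only finitely many points of the fiber `f⁻¹(y)` lie in the support of `g` (so the fiber
sum is a finite sum), the fiberwise sum `f_* g` is compactly supported and locally
constant, and the pushforward is additive (a group homomorphism `C_c(Z,A) → C_c(Y,A)`). -/
theorem pushforward_fiber_sum {Z Y A : Type*}
    [TopologicalSpace Z] [TopologicalSpace Y]
    [LocallyCompactSpace Z] [T2Space Z] [LocallyCompactSpace Y] [T2Space Y]
    [AddCommGroup A]
    (f : Z → Y) (hf : IsLocalHomeomorph f)
    (g : Z → A) (hg : IsLocallyConstant g) (hgc : HasCompactSupport g) :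
    (∀ y : Y, (Function.support g ∩ f ⁻¹' {y}).Finite) ∧
    IsLocallyConstant (fun y => ∑ᶠ z ∈ f ⁻¹' {y}, g z) ∧
    HasCompactSupport (fun y => ∑ᶠ z ∈ f ⁻¹' {y}, g z) ∧
    (∀ g₁ g₂ : Z → A, IsLocallyConstant g₁ → HasCompactSupport g₁ →
      IsLocallyConstant g₂ → HasCompactSupport g₂ →
      (fun y => ∑ᶠ z ∈ f ⁻¹' {y}, (g₁ + g₂) z) =
        (fun y => ∑ᶠ z ∈ f ⁻¹' {y}, g₁ z) + fun y => ∑ᶠ z ∈ f ⁻¹' {y}, g₂ z) :=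
  pushforward_fiber_sum_general f hf g hg hgc
end

section
/- Let X_0 ⊆ X_1 ⊆ X_2 ⊆ ⋯ be a sequence of T1 topological spaces where each inclusion is a closed embedding, with basepoint in X_0, and let X = colim_i X_i be the colimit with the final topology. Then for every n ≥ 0 the canonical map colim_i π_n(X_i) → π_n(X) is a bijection (an isomorphism of groups for n ≥ 1). -/
/-!
Every compact subset `K` of `X` lies in some `A i`: otherwise points `x i ∈ K \ A i` form a set
meeting each `A i` in finitely many points, so by the final topology and the `T1` property all of
its subsets are closed, and it is an infinite closed discrete subset of the compact set `K`.
Applied to the image of a cube, this puts a representative of every class of `π_n(X)`, and a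
homotopy between two representatives, inside a single `A i`.
-/

open Topology.Homotopy

def GenLoop.push {N : Type*} {Y Z : Type*} [TopologicalSpace Y] [TopologicalSpace Z]
    (f : C(Y, Z)) {y : Y} (γ : GenLoop N Y y) : GenLoop N Z (f y) :=
  ⟨f.comp γ.1, fun t ht => by
    show f (γ.1 t) = f y
    rw [γ.2 t ht]⟩

def HomotopyGroup.map {N : Type*} {Y Z : Type*} [TopologicalSpace Y] [TopologicalSpace Z]
    (f : C(Y, Z)) (y : Y) :
    HomotopyGroup N Y y → HomotopyGroup N Z (f y) :=
  Quotient.map (GenLoop.push f) (by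
    intro a b hab
    exact hab.map (fun H => H.compContinuousMap f))

def subIncl {X : Type*} [TopologicalSpace X] (A : Set X) : C(A, X) :=
  ⟨Subtype.val, continuous_subtype_val⟩

def subIncl₂ {X : Type*} [TopologicalSpace X] {A B : Set X} (h : A ⊆ B) : C(A, B) :=
  ⟨Set.inclusion h, continuous_inclusion h⟩

open Set

theorem Set.Finite.exists_subset_of_monotone {X : Type*} {A : ℕ → Set X} (hmono : Monotone A)
    (hcover : ⋃ i, A i = univ) {S : Set X} (hS : S.Finite) : ∃ i, S ⊆ A i := by
  choose k hk using fun p => mem_iUnion.1 (hcover ▸ mem_univ p : p ∈ ⋃ i, A i)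
  obtain ⟨m, hm⟩ := (hS.image k).bddAbove
  exact ⟨m, fun p hp => hmono (hm (mem_image_of_mem k hp)) (hk p)⟩

section SeqColimit

variable {X : Type*} [TopologicalSpace X] {A : ℕ → Set X}

theorem isClosed_of_forall_finite_inter (hT1 : ∀ i, T1Space (A i))
    (hfinal : ∀ S : Set X, IsOpen S ↔ ∀ i, IsOpen ((↑·) ⁻¹' S : Set (A i)))
    {T : Set X} (hT : ∀ i, (T ∩ A i).Finite) : IsClosed T := by
  rw [← isOpen_compl_iff, hfinal]
  intro i
  rw [preimage_compl, isOpen_compl_iff]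
  have := hT1 i
  exact (((hT i).preimage Subtype.val_injective.injOn).subset fun a ha => ⟨ha, a.2⟩).isClosed

theorem exists_subset_of_isCompact (hmono : Monotone A) (hT1 : ∀ i, T1Space (A i))
    (hcover : ⋃ i, A i = univ)
    (hfinal : ∀ S : Set X, IsOpen S ↔ ∀ i, IsOpen ((↑·) ⁻¹' S : Set (A i)))
    {K : Set X} (hK : IsCompact K) : ∃ i, K ⊆ A i := by
  by_contra! h
  choose x hxK hxA using fun i => not_subset.1 (h i)
  have hclosed : ∀ T ⊆ range x, IsClosed T := fun T hT =>
    isClosed_of_forall_finite_inter hT1 hfinal fun i => ((finite_Iio i).image x).subset <| by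
      rintro _ ⟨hxT, hxi⟩
      obtain ⟨j, rfl⟩ := hT hxT
      exact ⟨j, lt_of_not_ge fun hij => hxA j (hmono hij hxi), rfl⟩
  have hdiscrete : IsDiscrete (range x) :=
    isDiscrete_iff_forall_mem_exists_isClosed.2 fun T hT => ⟨T, hclosed T hT, inter_eq_left.2 hT⟩
  have hfinite : (range x).Finite :=
    (hK.of_isClosed_subset (hclosed _ subset_rfl) (range_subset_iff.2 hxK)).finite hdiscrete
  obtain ⟨m, hm⟩ := hfinite.exists_subset_of_monotone hmono hcover
  exact hxA m (hm ⟨m, rfl⟩)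

end SeqColimit

section Subspace

variable {N X : Type*} [TopologicalSpace X] {B : Set X}

@[simp]
theorem HomotopyGroup.map_mk {Y : Type*} [TopologicalSpace Y] (f : C(X, Y)) {x : X}
    (γ : Ω^ N X x) : HomotopyGroup.map f x ⟦γ⟧ = ⟦GenLoop.push f γ⟧ :=
  rfl

def GenLoop.codRestrict {x : X} (γ : Ω^ N X x) (hγ : ∀ t, γ t ∈ B) (hx : x ∈ B) :
    Ω^ N B ⟨x, hx⟩ :=
  ⟨⟨Set.codRestrict γ B hγ, γ.1.continuous.codRestrict hγ⟩, fun t ht => Subtype.ext (γ.2 t ht)⟩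

theorem GenLoop.homotopic_of_homotopyRel_mem {b : B} {γ γ' : Ω^ N B b}
    (H : (GenLoop.push (subIncl B) γ).1.HomotopyRel (GenLoop.push (subIncl B) γ').1
      (Cube.boundary N))
    (hH : ∀ p, H p ∈ B) : GenLoop.Homotopic γ γ' :=
  ⟨{ toFun p := ⟨H p, hH p⟩
     continuous_toFun := H.continuous.subtype_mk hH
     map_zero_left t := Subtype.ext (H.apply_zero t)
     map_one_left t := Subtype.ext (H.apply_one t)
     prop' t y hy := Subtype.ext (H.prop t y hy) }⟩

end Subspace

theorem homotopyGroup_seq_colimit_general {X : Type*} [TopologicalSpace X]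
    (A : ℕ → Set X) (hmono : Monotone A)
    (hT1 : ∀ i, T1Space (A i))
    (hcover : ⋃ i, A i = Set.univ)
    (hfinal : ∀ S : Set X, IsOpen S ↔ ∀ i, IsOpen ((↑·) ⁻¹' S : Set (A i)))
    (x₀ : X) (hx₀ : x₀ ∈ A 0) (n : ℕ) :
    (∀ α : HomotopyGroup (Fin n) X x₀, ∃ (i : ℕ)
      (β : HomotopyGroup (Fin n) (A i) ⟨x₀, hmono (Nat.zero_le i) hx₀⟩),
      HomotopyGroup.map (subIncl (A i)) _ β = α) ∧
    (∀ (i : ℕ) (β β' : HomotopyGroup (Fin n) (A i) ⟨x₀, hmono (Nat.zero_le i) hx₀⟩),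
      HomotopyGroup.map (subIncl (A i)) _ β = HomotopyGroup.map (subIncl (A i)) _ β' →
      ∃ (j : ℕ) (hij : i ≤ j),
        HomotopyGroup.map (subIncl₂ (hmono hij)) _ β =
          HomotopyGroup.map (subIncl₂ (hmono hij)) _ β') := by
  constructor
  · refine fun α => Quotient.inductionOn α fun γ => ?_
    obtain ⟨i, hi⟩ := exists_subset_of_isCompact hmono hT1 hcover hfinal
      (isCompact_range γ.1.continuous)
    exact ⟨i, ⟦GenLoop.codRestrict γ (fun t => hi ⟨t, rfl⟩) (hmono i.zero_le hx₀)⟧, rfl⟩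
  · refine fun i β β' => Quotient.inductionOn₂ β β' fun γ γ' h => ?_
    simp only [HomotopyGroup.map_mk] at h ⊢
    obtain ⟨H⟩ := Quotient.exact h
    obtain ⟨j, hj⟩ := exists_subset_of_isCompact hmono hT1 hcover hfinal
      (isCompact_range H.continuous)
    refine ⟨max i j, le_max_left i j, ?_⟩
    -- `A i ⊆ A (max i j) ⊆ X` composes definitionally to `A i ⊆ X`, so `H` applies as it stands.
    exact Quotient.sound <| GenLoop.homotopic_of_homotopyRel_mem H
      fun p => hmono (le_max_right i j) (hj ⟨p, rfl⟩)

/-- Homotopy groups commute with sequential colimits along closed inclusions of `T1`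
spaces: if `X` carries the final topology of an increasing sequence of closed subsets
`A i` (each a `T1` space) covering `X`, then for every `n` the canonical map
`colim_i π_n(A i) → π_n(X)` is bijective, i.e. every class in `π_n(X)` comes from some
`A i` (surjectivity of the colimit comparison) and two classes from `A i` that agree in
`X` agree in some `A j`, `i ≤ j` (injectivity). -/
theorem homotopyGroup_seq_colimit {X : Type*} [TopologicalSpace X]
    (A : ℕ → Set X) (hmono : Monotone A) (hclosed : ∀ i, IsClosed (A i))
    (hT1 : ∀ i, T1Space (A i))
    (hcover : ⋃ i, A i = Set.univ)
    (hfinal : ∀ S : Set X, IsOpen S ↔ ∀ i, IsOpen ((↑·) ⁻¹' S : Set (A i)))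
    (x₀ : X) (hx₀ : x₀ ∈ A 0) (n : ℕ) :
    (∀ α : HomotopyGroup (Fin n) X x₀, ∃ (i : ℕ)
      (β : HomotopyGroup (Fin n) (A i) ⟨x₀, hmono (Nat.zero_le i) hx₀⟩),
      HomotopyGroup.map (subIncl (A i)) _ β = α) ∧
    (∀ (i : ℕ) (β β' : HomotopyGroup (Fin n) (A i) ⟨x₀, hmono (Nat.zero_le i) hx₀⟩),
      HomotopyGroup.map (subIncl (A i)) _ β = HomotopyGroup.map (subIncl (A i)) _ β' →
      ∃ (j : ℕ) (hij : i ≤ j),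
        HomotopyGroup.map (subIncl₂ (hmono hij)) _ β =
          HomotopyGroup.map (subIncl₂ (hmono hij)) _ β') :=
  homotopyGroup_seq_colimit_general A hmono hT1 hcover hfinal x₀ hx₀ n
end
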